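/- arXiv:1005.5673 — 3 statements merged into one kernel-verified Lean document; each statement's English description precedes it below -/
import Mathlib

section
/- Let (Ω,d,μ) be a metric probability space satisfying Conditions 1' and 2, let 1 ≤ q < ∞, and let f ∈ Lip(Ω) ∩ L¹(Ω) with ∫_Ω |∇f|^q dμ < ∞. Then the function Ψ(t) = ∫_{{x:|f(x)| > f*_μ(t)}} |∇f(x)|^q dμ(x) is locally absolutely continuous on (0,1). -/
open MeasureTheory Set Filter Topology
open scoped ENNReal NNReal

noncomputable section

/-- The distribution function `μ_f(t) = μ{x : |f x| > t}` (as a real number). -/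
def distrib {α : Type*} [MeasurableSpace α] (μ : Measure α) (f : α → ℝ) (t : ℝ) : ℝ :=
  (μ {x | t < |f x|}).toReal

/-- The decreasing rearrangement `f*_μ(s) = inf{t ≥ 0 : μ_f(t) ≤ s}`. -/
def rearr {α : Type*} [MeasurableSpace α] (μ : Measure α) (f : α → ℝ) (s : ℝ) : ℝ :=
  sInf {t : ℝ | 0 ≤ t ∧ distrib μ f t ≤ s}

/-- The maximal function `f**_μ(t) = (1/t) ∫₀ᵗ f*_μ(s) ds`. -/
def rearr2 {α : Type*} [MeasurableSpace α] (μ : Measure α) (f : α → ℝ) (t : ℝ) : ℝ :=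
  (1 / t) * ∫ s in (0:ℝ)..t, rearr μ f s

/-- The modulus of the gradient `|∇f|(x) = limsup_{d(x,y)→0} |f x - f y| / d(x,y)`. -/
def gradMod {Ω : Type*} [MetricSpace Ω] (f : Ω → ℝ) (x : Ω) : ℝ :=
  limsup (fun y => |f x - f y| / dist x y) (𝓝[≠] x)

/-- The Minkowski content `μ⁺(A) = liminf_{h→0⁺} (μ(A_h) - μ(A))/h`. -/
def minkContent {Ω : Type*} [MetricSpace Ω] [MeasurableSpace Ω] (μ : Measure Ω)
    (A : Set Ω) : ℝ :=
  liminf (fun h => ((μ (Metric.thickening h A)).toReal - (μ A).toReal) / h) (𝓝[>] 0)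

/-- The isoperimetric profile: the (pointwise maximal) function with
`μ⁺(A) ≥ I(μ(A))` for all Borel sets `A`. -/
def isoProfile {Ω : Type*} [MetricSpace Ω] [MeasurableSpace Ω] (μ : Measure Ω) (t : ℝ) : ℝ :=
  sInf (minkContent μ '' {A : Set Ω | MeasurableSet A ∧ (μ A).toReal = t})

/-- Condition 1': the isoperimetric profile is continuous, positive on `(0,1)`,
and vanishes at `0`. -/
def Condition1' {Ω : Type*} [MetricSpace Ω] [MeasurableSpace Ω] (μ : Measure Ω) : Prop :=
  ContinuousOn (isoProfile μ) (Icc 0 1) ∧ (∀ t ∈ Ioo (0:ℝ) 1, 0 < isoProfile μ t) ∧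
    isoProfile μ 0 = 0

/-- Condition 2: for Lipschitz `f` and every `c`, `|∇f| = 0` μ-a.e. on `{f = c}`. -/
def Condition2 {Ω : Type*} [MetricSpace Ω] [MeasurableSpace Ω] (μ : Measure Ω) : Prop :=
  ∀ f : Ω → ℝ, (∃ K, LipschitzWith K f) → ∀ c : ℝ,
    ∀ᵐ x ∂(μ.restrict {x | f x = c}), gradMod f x = 0

/-- The weights `w_q` built from the isoperimetric profile. -/
def wq (I : ℝ → ℝ) (q t : ℝ) : ℝ :=
  if q = 1 then sInf ((fun s => I s / s) '' Ioo 0 t)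
  else ((1 / t) * ∫ s in (0:ℝ)..t, (s / I s) ^ (q / (q - 1))) ^ ((1 - q) / q)

/-- Local absolute continuity on `(0,1)`. -/
def LocAbsContOn01 (g : ℝ → ℝ) : Prop :=
  ∀ a b : ℝ, 0 < a → a < b → b < 1 → ∀ ε > 0, ∃ δ > 0,
    ∀ (n : ℕ) (c d : Fin n → ℝ),
      (∀ k, a ≤ c k ∧ c k ≤ d k ∧ d k ≤ b) →
      (Pairwise fun j k => Ioo (c j) (d j) ∩ Ioo (c k) (d k) = ∅) →
      (∑ k, (d k - c k)) ≤ δ → (∑ k, |g (d k) - g (c k)|) ≤ ε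

/-!
For `0 < c ≤ d`, `Ψ d - Ψ c` is the integral of `|∇f|^q` over `{f*(d) < |f| ≤ f*(c)}`. By
Condition 2 the integrand vanishes a.e. on the level set `{|f| = f*(c)}`, and the remaining strip
`{f*(d) < |f| < f*(c)}` has measure at most `d - c`, since `μ{|f| > f*(s)} ≤ s ≤ μ{|f| ≥ f*(s)}`.
Strips of non-overlapping intervals are disjoint, so `∑ |Ψ dₖ - Ψ cₖ|` is the integral of
`|∇f|^q` over a set of measure at most `∑ (dₖ - cₖ)`, and absolute continuity of the integral
concludes.
-/

section SuperlevelSets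

variable {α : Type*} [MeasurableSpace α] {μ : Measure α} {g : α → ℝ} {r : ℝ} {m : ℝ≥0∞}

theorem measure_setOf_lt_le_of_forall_gt (h : ∀ t, r < t → μ {x | t < g x} ≤ m) :
    μ {x | r < g x} ≤ m := by
  obtain ⟨u, hu_anti, hu_gt, hu_lim⟩ := exists_seq_strictAnti_tendsto r
  have hunion : {x | r < g x} = ⋃ n, {x | u n < g x} := by
    ext x
    simp only [mem_ofPred_eq, mem_iUnion]
    exact ⟨fun hx => (hu_lim.eventually (gt_mem_nhds hx)).exists, fun ⟨n, hn⟩ => (hu_gt n).trans hn⟩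
  have hmono : Monotone fun n => {x | u n < g x} := fun i j hij x hx =>
    (hu_anti.antitone hij).trans_lt hx
  rw [hunion, hmono.measure_iUnion]
  exact iSup_le fun n => h _ (hu_gt n)

theorem le_measure_setOf_le_of_forall_lt [IsFiniteMeasure μ] (hg : AEMeasurable g μ)
    (h : ∀ t < r, m ≤ μ {x | t < g x}) : m ≤ μ {x | r ≤ g x} := by
  obtain ⟨u, hu_mono, hu_lt, hu_lim⟩ := exists_seq_strictMono_tendsto r
  have hinter : {x | r ≤ g x} = ⋂ n, {x | u n < g x} := by
    ext x
    simp only [mem_ofPred_eq, mem_iInter]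
    exact ⟨fun hx n => (hu_lt n).trans_le hx, fun hx => le_of_tendsto' hu_lim fun n => (hx n).le⟩
  have hanti : Antitone fun n => {x | u n < g x} := fun i j hij x hx =>
    (hu_mono.monotone hij).trans_lt hx
  rw [hinter, hanti.measure_iInter (fun n => nullMeasurableSet_lt aemeasurable_const hg)
    ⟨0, measure_ne_top μ _⟩]
  exact le_iInf fun n => h _ (hu_lt n)

end SuperlevelSets

theorem MeasureTheory.Integrable.exists_pos_setIntegral_le {α : Type*} [MeasurableSpace α]
    {μ : Measure α} {g : α → ℝ} (hg : Integrable g μ) (hg0 : 0 ≤ᵐ[μ] g) {ε : ℝ} (hε : 0 < ε) :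
    ∃ δ > 0, ∀ s, μ s ≤ ENNReal.ofReal δ → ∫ x in s, g x ∂μ ≤ ε := by
  obtain ⟨η, hη, hηε⟩ :=
    exists_pos_setLIntegral_lt_of_measure_lt hg.lintegral_lt_top.ne (ENNReal.ofReal_pos.2 hε).ne'
  obtain ⟨δ, -, hδ, hδη⟩ := ENNReal.lt_iff_exists_real_btwn.1 hη
  refine ⟨δ, ENNReal.ofReal_pos.1 hδ, fun s hs => ?_⟩
  rw [integral_eq_lintegral_of_nonneg_ae (ae_restrict_of_ae hg0) hg.1.restrict]
  exact ENNReal.toReal_le_of_le_ofReal hε.le (hηε s (hs.trans_lt hδη)).le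

section Rearrangement

variable {α : Type*} [MeasurableSpace α] {μ : Measure α} {f : α → ℝ} {s t : ℝ}

theorem bddBelow_distrib_le : BddBelow {t : ℝ | 0 ≤ t ∧ distrib μ f t ≤ s} :=
  ⟨0, fun _ ht => ht.1⟩

theorem nonempty_distrib_le [IsFiniteMeasure μ] (hf : AEMeasurable f μ) (hs : 0 < s) :
    {t : ℝ | 0 ≤ t ∧ distrib μ f t ≤ s}.Nonempty := by
  have hanti : Antitone fun t : ℝ => {x | t < |f x|} := fun i j hij x hx => hij.trans_lt hx
  have hempty : ⋂ t : ℝ, {x | t < |f x|} = ∅ :=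
    iInter_eq_empty_iff.2 fun x => ⟨|f x|, lt_irrefl (|f x|)⟩
  have hlim := tendsto_measure_iInter_atTop (μ := μ)
    (fun t => nullMeasurableSet_lt aemeasurable_const hf.abs) hanti ⟨0, measure_ne_top μ _⟩
  rw [hempty, measure_empty] at hlim
  obtain ⟨t, ht, hlt⟩ := ((eventually_ge_atTop 0).and
    (hlim.eventually (gt_mem_nhds (ENNReal.ofReal_pos.2 hs)))).exists
  exact ⟨t, ht, ENNReal.toReal_le_of_le_ofReal hs.le hlt.le⟩

theorem rearr_antitoneOn [IsFiniteMeasure μ] (hf : AEMeasurable f μ) :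
    AntitoneOn (rearr μ f) (Ioi 0) := fun _ hs _ _ hst =>
  csInf_le_csInf bddBelow_distrib_le (nonempty_distrib_le hf hs) fun _ ht => ⟨ht.1, ht.2.trans hst⟩

theorem measure_lt_abs_le_of_rearr_lt [IsFiniteMeasure μ] (hf : AEMeasurable f μ) (hs : 0 < s)
    (ht : rearr μ f s < t) : μ {x | t < |f x|} ≤ ENNReal.ofReal s := by
  obtain ⟨u, hu, hut⟩ := (csInf_lt_iff bddBelow_distrib_le (nonempty_distrib_le hf hs)).1 ht
  calc μ {x | t < |f x|} ≤ μ {x | u < |f x|} := measure_mono fun x hx => hut.trans hx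
    _ ≤ ENNReal.ofReal s := by
      rw [← ENNReal.ofReal_toReal (measure_ne_top μ _)]
      exact ENNReal.ofReal_le_ofReal hu.2

theorem ofReal_le_measure_lt_abs_of_lt_rearr [IsProbabilityMeasure μ] (hs : s ≤ 1)
    (ht : t < rearr μ f s) : ENNReal.ofReal s ≤ μ {x | t < |f x|} := by
  rcases lt_or_ge t 0 with ht0 | ht0
  · have huniv : {x | t < |f x|} = univ := eq_univ_of_forall fun x => ht0.trans_le (abs_nonneg _)
    rw [huniv, measure_univ]
    exact ENNReal.ofReal_le_one.2 hs
  · have hdistrib : s < distrib μ f t := not_le.1 fun h =>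
      (csInf_le bddBelow_distrib_le ⟨ht0, h⟩).not_gt ht
    exact ENNReal.ofReal_le_of_le_toReal hdistrib.le

theorem measure_rearr_lt_abs_le [IsFiniteMeasure μ] (hf : AEMeasurable f μ) (hs : 0 < s) :
    μ {x | rearr μ f s < |f x|} ≤ ENNReal.ofReal s :=
  measure_setOf_lt_le_of_forall_gt fun _ => measure_lt_abs_le_of_rearr_lt hf hs

theorem ofReal_le_measure_rearr_le_abs [IsProbabilityMeasure μ] (hf : AEMeasurable f μ)
    (hs : s ≤ 1) : ENNReal.ofReal s ≤ μ {x | rearr μ f s ≤ |f x|} :=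
  le_measure_setOf_le_of_forall_lt hf.abs fun _ => ofReal_le_measure_lt_abs_of_lt_rearr hs

end Rearrangement

section Strips

variable {α : Type*} [MeasurableSpace α] {μ : Measure α} {f : α → ℝ} {c d : ℝ}

def rearrStrip (μ : Measure α) (f : α → ℝ) (c d : ℝ) : Set α :=
  {x | rearr μ f d < |f x| ∧ |f x| < rearr μ f c}

theorem measure_rearrStrip_le [IsProbabilityMeasure μ] (hf : AEMeasurable f μ) (hc : 0 < c)
    (hcd : c ≤ d) (hd : d ≤ 1) : μ (rearrStrip μ f c d) ≤ ENNReal.ofReal (d - c) := by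
  rcases (rearr_antitoneOn hf hc (hc.trans_le hcd) hcd).eq_or_lt with heq | hlt
  · have hempty : rearrStrip μ f c d = ∅ :=
      eq_empty_of_forall_notMem fun x hx => (hx.1.trans hx.2).ne heq
    simp [hempty]
  · have hsub : {x | rearr μ f c ≤ |f x|} ⊆ {x | rearr μ f d < |f x|} := fun x hx =>
      hlt.trans_le hx
    calc μ (rearrStrip μ f c d)
        ≤ μ ({x | rearr μ f d < |f x|} \ {x | rearr μ f c ≤ |f x|}) :=
          measure_mono fun x hx => ⟨hx.1, not_le.2 hx.2⟩
      _ = μ {x | rearr μ f d < |f x|} - μ {x | rearr μ f c ≤ |f x|} :=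
          measure_sdiff hsub (nullMeasurableSet_le aemeasurable_const hf.abs) (measure_ne_top μ _)
      _ ≤ ENNReal.ofReal d - ENNReal.ofReal c :=
          tsub_le_tsub (measure_rearr_lt_abs_le hf (hc.trans_le hcd))
            (ofReal_le_measure_rearr_le_abs hf (hcd.trans hd))
      _ = ENNReal.ofReal (d - c) := (ENNReal.ofReal_sub _ hc.le).symm

theorem disjoint_rearrStrip [IsFiniteMeasure μ] (hf : AEMeasurable f μ) {c₁ d₁ c₂ d₂ : ℝ}
    (hd₁ : 0 < d₁) (hd₂ : 0 < d₂) (h : min d₁ d₂ ≤ max c₁ c₂) :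
    Disjoint (rearrStrip μ f c₁ d₁) (rearrStrip μ f c₂ d₂) := by
  have hle : ∀ {d c : ℝ}, 0 < d → d ≤ c → rearr μ f c ≤ rearr μ f d := fun hd hdc =>
    rearr_antitoneOn hf hd (hd.trans_le hdc) hdc
  rw [disjoint_left]
  rintro x ⟨hx₁, hx₁'⟩ ⟨hx₂, hx₂'⟩
  rcases min_le_iff.1 h with hd | hd <;> rcases le_max_iff.1 hd with hdc | hdc
  · linarith [hle hd₁ hdc]
  · linarith [hle hd₁ hdc]
  · linarith [hle hd₂ hdc]
  · linarith [hle hd₂ hdc]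

theorem setIntegral_rearr_lt_abs_sub {E : Type*} [NormedAddCommGroup E] [NormedSpace ℝ E]
    [IsFiniteMeasure μ] (hf : Measurable f) {g : α → E} (hg : Integrable g μ) (hc : 0 < c)
    (hcd : c ≤ d) (hzero : ∀ᵐ x ∂μ, |f x| = rearr μ f c → g x = 0) :
    ∫ x in {x | rearr μ f d < |f x|}, g x ∂μ - ∫ x in {x | rearr μ f c < |f x|}, g x ∂μ =
      ∫ x in rearrStrip μ f c d, g x ∂μ := by
  have hsub : {x | rearr μ f c < |f x|} ⊆ {x | rearr μ f d < |f x|} := fun x hx =>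
    (rearr_antitoneOn hf.aemeasurable hc (hc.trans_le hcd) hcd).trans_lt hx
  rw [← setIntegral_sdiff (measurableSet_lt measurable_const hf.abs) hg.integrableOn hsub]
  refine setIntegral_eq_of_subset_of_ae_sdiff_eq_zero
    ((measurableSet_lt measurable_const hf.abs).diff
      (measurableSet_lt measurable_const hf.abs)).nullMeasurableSet
    (fun x hx => ⟨hx.1, hx.2.not_gt⟩) ?_
  filter_upwards [hzero] with x hx ⟨⟨hd, hc⟩, hstrip⟩
  exact hx (le_antisymm (not_lt.1 hc) (not_lt.1 fun h => hstrip ⟨hd, h⟩))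

theorem locAbsContOn01_setIntegral_rearr_lt_abs [IsProbabilityMeasure μ] (hf : Measurable f)
    {g : α → ℝ} (hg : Integrable g μ) (hg0 : 0 ≤ g)
    (hzero : ∀ v, ∀ᵐ x ∂μ, |f x| = v → g x = 0) :
    LocAbsContOn01 fun t => ∫ x in {x | rearr μ f t < |f x|}, g x ∂μ := by
  intro a b ha _ hb ε hε
  obtain ⟨δ, hδ, hδε⟩ := hg.exists_pos_setIntegral_le (ae_of_all _ hg0) hε
  refine ⟨δ, hδ, fun n c d hcd hdisj hsum => ?_⟩
  set S : Fin n → Set α := fun k => rearrStrip μ f (c k) (d k)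
  have hc k : 0 < c k := ha.trans_le (hcd k).1
  have hd k : 0 < d k := (hc k).trans_le (hcd k).2.1
  have hS_meas k : MeasurableSet (S k) :=
    (measurableSet_lt measurable_const hf.abs).inter (measurableSet_lt hf.abs measurable_const)
  have hS_disj : Pairwise (Function.onFun Disjoint S) := fun j k hjk =>
    disjoint_rearrStrip hf.aemeasurable (hd j) (hd k)
      (Ioo_disjoint_Ioo.1 (disjoint_iff_inter_eq_empty.2 (hdisj hjk)))
  have hS_small : μ (⋃ k, S k) ≤ ENNReal.ofReal δ :=
    calc μ (⋃ k, S k) ≤ ∑ k, μ (S k) := measure_iUnion_fintype_le μ S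
      _ ≤ ∑ k, ENNReal.ofReal (d k - c k) := Finset.sum_le_sum fun k _ =>
          measure_rearrStrip_le hf.aemeasurable (hc k) (hcd k).2.1 ((hcd k).2.2.trans hb.le)
      _ = ENNReal.ofReal (∑ k, (d k - c k)) :=
          (ENNReal.ofReal_sum_of_nonneg fun k _ => sub_nonneg.2 (hcd k).2.1).symm
      _ ≤ ENNReal.ofReal δ := ENNReal.ofReal_le_ofReal hsum
  calc ∑ k, |∫ x in {x | rearr μ f (d k) < |f x|}, g x ∂μ
        - ∫ x in {x | rearr μ f (c k) < |f x|}, g x ∂μ|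
      = ∑ k, ∫ x in S k, g x ∂μ := Finset.sum_congr rfl fun k _ => by
        rw [setIntegral_rearr_lt_abs_sub hf hg (hc k) (hcd k).2.1 (hzero _),
          abs_of_nonneg (setIntegral_nonneg (hS_meas k) fun x _ => hg0 x)]
    _ = ∫ x in ⋃ k, S k, g x ∂μ :=
        (integral_iUnion_fintype hS_meas hS_disj fun _ => hg.integrableOn).symm
    _ ≤ ε := hδε _ hS_small

end Strips

theorem Condition2.ae_gradMod_eq_zero_of_abs_eq {Ω : Type*} [MetricSpace Ω] [MeasurableSpace Ω]
    [BorelSpace Ω] {μ : Measure Ω} (h2 : Condition2 μ) {f : Ω → ℝ} {K : ℝ≥0}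
    (hf : LipschitzWith K f) (v : ℝ) : ∀ᵐ x ∂μ, |f x| = v → gradMod f x = 0 := by
  have hlevel : ∀ w, ∀ᵐ x ∂μ, f x = w → gradMod f x = 0 := fun w =>
    (ae_restrict_iff' (measurableSet_eq_fun hf.continuous.measurable measurable_const)).1
      (h2 f ⟨K, hf⟩ w)
  filter_upwards [hlevel v, hlevel (-v)] with x hv hnv hx
  exact (eq_or_eq_neg_of_abs_eq hx).elim hv hnv

theorem psi_locally_absolutely_continuous_general
    {Ω : Type*} [MetricSpace Ω] [MeasurableSpace Ω] [BorelSpace Ω]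
    (μ : Measure Ω) [IsProbabilityMeasure μ] (h2 : Condition2 μ) (q : ℝ) (hq : 1 ≤ q)
    (f : Ω → ℝ) (hfLip : ∃ K, LipschitzWith K f)
    (hgrad : Integrable (fun x => |gradMod f x| ^ q) μ) :
    LocAbsContOn01 (fun t => ∫ x in {x | rearr μ f t < |f x|}, |gradMod f x| ^ q ∂μ) := by
  obtain ⟨K, hK⟩ := hfLip
  have hq0 : q ≠ 0 := (zero_lt_one.trans_le hq).ne'
  refine locAbsContOn01_setIntegral_rearr_lt_abs hK.continuous.measurable hgrad
    (fun x => by positivity) fun v => ?_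
  filter_upwards [h2.ae_gradMod_eq_zero_of_abs_eq hK v] with x hx hxv
  simp [hx hxv, hq0]

/-- Under Conditions 1' and 2, if `f ∈ Lip(Ω) ∩ L¹(Ω)` with
`∫ |∇f|^q dμ < ∞`, the function `Ψ(t) = ∫_{{|f| > f*_μ(t)}} |∇f|^q dμ` is locally
absolutely continuous on `(0,1)`. -/
theorem psi_locally_absolutely_continuous
    {Ω : Type*} [MetricSpace Ω] [ConnectedSpace Ω] [TopologicalSpace.SeparableSpace Ω]
    [MeasurableSpace Ω] [BorelSpace Ω] (μ : Measure Ω) [IsProbabilityMeasure μ] [NullSingletonClass μ]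
    (h1 : Condition1' μ) (h2 : Condition2 μ) (q : ℝ) (hq : 1 ≤ q)
    (f : Ω → ℝ) (hfLip : ∃ K, LipschitzWith K f) (hfL1 : Integrable f μ)
    (hgrad : Integrable (fun x => |gradMod f x| ^ q) μ) :
    LocAbsContOn01 (fun t => ∫ x in {x | rearr μ f t < |f x|}, |gradMod f x| ^ q ∂μ) :=
  psi_locally_absolutely_continuous_general μ h2 q hq f hfLip hgrad
end
end

section
/- Let n ≥ 1 and let X(ℝⁿ) be a rearrangement-invariant space. Suppose there exists c > 0 such that φ_X(m(A)) ≤ c·m⁺(A) for every Borel set A ⊂ ℝⁿ with m(A) < ∞. Then for every f ∈ Lip₀(ℝⁿ): ∫₀^∞ φ_X(m_f(t)) dt ≤ c ∫_{ℝⁿ} |∇f(x)| dx. -/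
open MeasureTheory Set Filter Topology
open scoped ENNReal NNReal

noncomputable section

/-- An abstract rearrangement-invariant (Banach function) norm over a measure `ν` on `ℝ`
(the representation measure, e.g. Lebesgue measure on `(0,1)` or on `(0,∞)`). -/
structure RINorm (ν : Measure ℝ) where
  /-- the norm functional (with value `∞` allowed) -/
  ρ : (ℝ → ℝ) → ℝ≥0∞
  /-- lattice monotonicity -/
  mono : ∀ g h : ℝ → ℝ, (∀ᵐ s ∂ν, |g s| ≤ |h s|) → ρ g ≤ ρ h
  /-- triangle inequality -/
  add_le : ∀ g h : ℝ → ℝ, ρ (g + h) ≤ ρ g + ρ h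
  /-- homogeneity -/
  smul : ∀ (c : ℝ) (g : ℝ → ℝ), ρ (fun s => c * g s) = ENNReal.ofReal |c| * ρ g
  /-- rearrangement invariance: equimeasurable functions have the same norm -/
  ri : ∀ g h : ℝ → ℝ, (∀ t, 0 < t → ν {s | t < |g s|} = ν {s | t < |h s|}) → ρ g = ρ h

/-- Lebesgue measure on `(0,1)`: representation measure for r.i. spaces over a
probability space. -/
def m01 : Measure ℝ := volume.restrict (Ioo 0 1)

namespace RINorm

variable {ν : Measure ℝ}

/-- The norm of a function `f : α → ℝ` in the r.i. space `X(α,μ)` represented by `X`: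
`‖f‖_X = ‖f*_μ‖_{X̄}`. -/
def normFn {α : Type*} [MeasurableSpace α] (X : RINorm ν) (μ : Measure α) (f : α → ℝ) :
    ℝ≥0∞ :=
  X.ρ (rearr μ f)

/-- The norm of `g : ℝ → ℝ` in the representation space `\overline{X^{(q)}}` of the
`q`-convexification: `‖g‖ = ‖|g|^q‖_{X̄}^{1/q}`. -/
def barQ (X : RINorm ν) (q : ℝ) (g : ℝ → ℝ) : ℝ≥0∞ :=
  (X.ρ fun s => |g s| ^ q) ^ (1 / q)

/-- The norm of `f : α → ℝ` in the `q`-convexification `X^{(q)}`: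
`‖f‖_{X^{(q)}} = ‖|f|^q‖_X^{1/q}`. -/
def normQ {α : Type*} [MeasurableSpace α] (X : RINorm ν) (q : ℝ) (μ : Measure α)
    (f : α → ℝ) : ℝ≥0∞ :=
  (X.ρ (rearr μ fun x => |f x| ^ q)) ^ (1 / q)

/-- The dilation operator `E_s f(t) = f*(t/s)` for `0 < t < min(1,s)`, `0` otherwise. -/
def dilate (ν : Measure ℝ) (s : ℝ) (g : ℝ → ℝ) (t : ℝ) : ℝ :=
  if 0 < t ∧ t < min 1 s then rearr ν g (t / s) else 0

/-- The norm `h_X(s)` of the dilation operator `E_s` on `X̄`. -/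
def dilNorm (X : RINorm ν) (s : ℝ) : ℝ≥0∞ :=
  ⨆ (g : ℝ → ℝ) (_ : X.ρ g ≤ 1), X.ρ (dilate ν s g)

/-- The upper Boyd index `ᾱ_X = inf_{s>1} ln h_X(s) / ln s`. -/
def boydUpper (X : RINorm ν) : ℝ :=
  sInf ((fun s => Real.log (X.dilNorm s).toReal / Real.log s) '' Ioi 1)

/-- The lower Boyd index `α_X = sup_{0<s<1} ln h_X(s) / ln s`. -/
def boydLower (X : RINorm ν) : ℝ :=
  sSup ((fun s => Real.log (X.dilNorm s).toReal / Real.log s) '' Ioo 0 1)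

/-- The fundamental function `φ_X(t) = ‖χ_A‖_X` for `μ(A) = t` (computed in the
representation space as the norm of `χ_{(0,t)}`). -/
def fund (X : RINorm ν) (t : ℝ) : ℝ≥0∞ :=
  X.ρ (indicator (Ioo 0 t) fun _ => (1:ℝ))

end RINorm

/-! Let `u = |f|` and `v_h(x) = sup_{B(x,h)} u`. The `h`-thickening of the superlevel set
`{u > t}` is exactly `{v_h > t}`, so by the layer-cake formula
`∫₀^∞ (m({u > t}_h) - m{u > t}) dt = ∫ (v_h - u) dx`. Dividing by `h` and applying Fatou's lemma
in `t` bounds `∫₀^∞ m⁺{u > t} dt` by `liminf_h ∫ (v_h - u)/h`. The quotients `(v_h - u)/h` are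
bounded by the Lipschitz constant on a fixed bounded set, and by Rademacher's theorem
`limsup_h (v_h - u)/h ≤ |∇f|` almost everywhere, so reverse Fatou gives
`∫₀^∞ m⁺{u > t} dt ≤ ∫ |∇f|`. The isoperimetric hypothesis bounds `φ_X(m_f(t))` by
`c m⁺{u > t}`. -/

def ballSup {E : Type*} [PseudoMetricSpace E] (u : E → ℝ) (h : ℝ) (x : E) : ℝ :=
  sSup (u '' Metric.ball x h)

section BallSup

variable {E : Type*} [PseudoMetricSpace E] {u : E → ℝ} {K : ℝ≥0} {h : ℝ}

lemma LipschitzWith.bddAbove_image_ball (hu : LipschitzWith K u) (x : E) (h : ℝ) :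
    BddAbove (u '' Metric.ball x h) :=
  (hu.isBounded_image Metric.isBounded_ball).bddAbove

lemma le_ballSup (hu : LipschitzWith K u) (hh : 0 < h) (x : E) : u x ≤ ballSup u h x :=
  le_csSup (hu.bddAbove_image_ball x h) (mem_image_of_mem u (Metric.mem_ball_self hh))

lemma ballSup_le (hh : 0 < h) {x : E} {M : ℝ} (hM : ∀ y ∈ Metric.ball x h, u y ≤ M) :
    ballSup u h x ≤ M :=
  csSup_le ((Metric.nonempty_ball.2 hh).image u) (forall_mem_image.2 hM)

lemma setOf_lt_ballSup (hu : LipschitzWith K u) (hh : 0 < h) (t : ℝ) :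
    {x | t < ballSup u h x} = Metric.thickening h {y | t < u y} := by
  ext x
  simp [ballSup, lt_csSup_iff (hu.bddAbove_image_ball x h) ((Metric.nonempty_ball.2 hh).image u),
    Metric.mem_thickening_iff, dist_comm x, and_comm]

lemma measurable_ballSup [MeasurableSpace E] [OpensMeasurableSpace E] (hu : LipschitzWith K u)
    (hh : 0 < h) : Measurable (ballSup u h) :=
  measurable_of_Ioi fun t => by
    simpa only [preimage, mem_Ioi, setOf_lt_ballSup hu hh t]
      using Metric.isOpen_thickening.measurableSet

lemma ballSup_sub_le (hu : LipschitzWith K u) (hh : 0 < h) (x : E) :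
    ballSup u h x - u x ≤ K * h := by
  rw [sub_le_iff_le_add']
  refine ballSup_le hh fun y hy => ?_
  have hyx := hu.dist_le_mul y x
  rw [Real.dist_eq] at hyx
  nlinarith [abs_le.1 hyx, Metric.mem_ball.1 hy, K.coe_nonneg]

lemma ballSup_eq_zero_of_notMem_thickening (hh : 0 < h) {x : E}
    (hx : x ∉ Metric.thickening h (Function.support u)) : ballSup u h x = 0 := by
  have hzero : ∀ y ∈ Metric.ball x h, u y = 0 := fun y hy => by
    by_contra hy0
    exact hx (Metric.mem_thickening_iff.2 ⟨y, hy0, Metric.mem_ball'.1 hy⟩)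
  rw [ballSup, image_congr hzero, (Metric.nonempty_ball.2 hh).image_const, csSup_singleton]

lemma ofReal_ballSup_sub_div_le_indicator (hu : LipschitzWith K u) (hh : 0 < h) {R : ℝ}
    (hhR : h ≤ R) (x : E) :
    ENNReal.ofReal ((ballSup u h x - u x) / h) ≤
      (Metric.thickening R (Function.support u)).indicator (fun _ => (K : ℝ≥0∞)) x := by
  by_cases hx : x ∈ Metric.thickening R (Function.support u)
  · rw [indicator_of_mem hx, ← ENNReal.ofReal_coe_nnreal]
    exact ENNReal.ofReal_le_ofReal ((div_le_iff₀ hh).2 (ballSup_sub_le hu hh x))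
  · have hx' : x ∉ Metric.thickening h (Function.support u) :=
      fun hmem => hx (Metric.thickening_mono hhR _ hmem)
    have hux : u x = 0 := Function.notMem_support.1
      fun hmem => hx' (Metric.self_subset_thickening hh _ hmem)
    simp [indicator_of_notMem hx, ballSup_eq_zero_of_notMem_thickening hh hx', hux]

end BallSup

lemma HasFDerivAt.eventually_ballSup_abs_sub_le {E : Type*} [NormedAddCommGroup E]
    [NormedSpace ℝ E] {f : E → ℝ} {f' : E →L[ℝ] ℝ} {x : E} (hf : HasFDerivAt f f' x) {ε : ℝ}
    (hε : 0 < ε) :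
    ∀ᶠ h in 𝓝[>] 0, ballSup (fun y => |f y|) h x - |f x| ≤ (‖f'‖ + ε) * h := by
  obtain ⟨δ, hδ, hsmall⟩ := Metric.eventually_nhds_iff.1 (hf.isLittleO.def hε)
  filter_upwards [Ioo_mem_nhdsGT hδ] with h ⟨hh, hhδ⟩
  rw [sub_le_iff_le_add']
  refine ballSup_le hh fun y hy => ?_
  have hyx : dist y x < h := hy
  have hlin : ‖f y - f x - f' (y - x)‖ ≤ ε * ‖y - x‖ := hsmall (hyx.trans hhδ)
  rw [dist_eq_norm] at hyx
  have hscale := mul_le_mul_of_nonneg_left hyx.le (by positivity : 0 ≤ ‖f'‖ + ε)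
  have hop : ‖f' (y - x)‖ ≤ ‖f'‖ * ‖y - x‖ := f'.le_opNorm (y - x)
  rw [Real.norm_eq_abs] at hlin hop
  have htri := abs_add_le (f y - f x - f' (y - x)) (f' (y - x))
  rw [sub_add_cancel] at htri
  nlinarith [abs_sub_abs_le_abs_sub (f y) (f x)]

lemma limsup_ofReal_ballSup_abs_sub_div_le {E : Type*} [NormedAddCommGroup E]
    [NormedSpace ℝ E] {f : E → ℝ} {f' : E →L[ℝ] ℝ} {x : E} (hf : HasFDerivAt f f' x)
    {r : ℕ → ℝ} (hr : Tendsto r atTop (𝓝[>] 0)) :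
    limsup (fun k => ENNReal.ofReal ((ballSup (fun y => |f y|) (r k) x - |f x|) / r k)) atTop ≤
      ENNReal.ofReal ‖f'‖ := by
  refine ENNReal.le_of_forall_pos_le_add fun ε hε _ => ?_
  have hbound : ∀ᶠ k in atTop,
      ENNReal.ofReal ((ballSup (fun y => |f y|) (r k) x - |f x|) / r k) ≤
        ENNReal.ofReal (‖f'‖ + ε) := by
    filter_upwards [hr.eventually (hf.eventually_ballSup_abs_sub_le hε),
      hr.eventually self_mem_nhdsWithin] with k hk hpos
    exact ENNReal.ofReal_le_ofReal ((div_le_iff₀ hpos).2 hk)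
  calc _ ≤ ENNReal.ofReal (‖f'‖ + ε) := limsup_le_of_le (by isBoundedDefault) hbound
    _ = ENNReal.ofReal ‖f'‖ + ε := by
      rw [ENNReal.ofReal_add (norm_nonneg _) ε.coe_nonneg, ENNReal.ofReal_coe_nnreal]

lemma ENNReal.ofReal_liminf_le {ι : Type*} (φ : ι → ℝ) (F : Filter ι) :
    ENNReal.ofReal (liminf φ F) ≤ liminf (fun i => ENNReal.ofReal (φ i)) F := by
  rw [liminf_eq]
  set S := {a | ∀ᶠ i in F, a ≤ φ i}
  rcases S.eq_empty_or_nonempty with hS | hS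
  · simp [hS]
  by_cases hbdd : BddAbove S
  · refine le_of_forall_lt_imp_le_of_dense fun b hb => ?_
    obtain ⟨a, ha, hba⟩ := exists_lt_of_lt_csSup hS
      ((ENNReal.lt_ofReal_iff_toReal_lt (ne_top_of_lt hb)).1 hb)
    calc b ≤ ENNReal.ofReal a := (ENNReal.le_ofReal_iff_toReal_le (ne_top_of_lt hb)
          ((ENNReal.toReal_nonneg).trans hba.le)).2 hba.le
      _ ≤ _ := le_liminf_of_le (by isBoundedDefault)
          (ha.mono fun i hi => ENNReal.ofReal_le_ofReal hi)
  · simp [Real.sSup_of_not_bddAbove hbdd]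

lemma ENNReal.ofReal_toReal_sub_toReal_le (a : ℝ≥0∞) {b : ℝ≥0∞} (hb : b ≠ ∞) :
    ENNReal.ofReal (a.toReal - b.toReal) ≤ a - b :=
  (ENNReal.ofReal_le_ofReal (ENNReal.le_toReal_sub hb)).trans ENNReal.ofReal_toReal_le

lemma ofReal_minkContent_le_liminf {Ω : Type*} [MetricSpace Ω] [MeasurableSpace Ω]
    (μ : Measure Ω) {A : Set Ω} (hA : μ A ≠ ∞) {r : ℕ → ℝ} (hr : Tendsto r atTop (𝓝[>] 0)) :
    ENNReal.ofReal (minkContent μ A) ≤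
      liminf (fun k => ENNReal.ofReal (r k)⁻¹ * (μ (Metric.thickening (r k) A) - μ A)) atTop := by
  calc ENNReal.ofReal (minkContent μ A)
      ≤ liminf (fun h => ENNReal.ofReal
          (((μ (Metric.thickening h A)).toReal - (μ A).toReal) / h)) (𝓝[>] 0) :=
        ENNReal.ofReal_liminf_le _ _
    _ ≤ liminf (fun k => ENNReal.ofReal
          (((μ (Metric.thickening (r k) A)).toReal - (μ A).toReal) / r k)) atTop :=
        hr.liminf_le_liminf_comp
    _ ≤ _ := by
      refine liminf_le_liminf ((hr.eventually self_mem_nhdsWithin).mono fun k hk => ?_)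
      rw [div_eq_inv_mul, ENNReal.ofReal_mul (inv_nonneg.2 (le_of_lt hk))]
      gcongr
      exact ENNReal.ofReal_toReal_sub_toReal_le _ hA

lemma antitone_measure_setOf_lt {α : Type*} [MeasurableSpace α] (μ : Measure α) (u : α → ℝ) :
    Antitone fun t => μ {x | t < u x} :=
  fun _ _ hst => measure_mono fun _ hx => hst.trans_lt hx

lemma lintegral_meas_lt_sub_meas_lt {α : Type*} [MeasurableSpace α] (μ : Measure α)
    {u v : α → ℝ} (hu0 : 0 ≤ u) (huv : u ≤ v) (hu : Measurable u) (hv : Measurable v)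
    (hfin : ∫⁻ x, ENNReal.ofReal (u x) ∂μ ≠ ∞) :
    ∫⁻ t in Ioi 0, (μ {x | t < v x} - μ {x | t < u x}) = ∫⁻ x, ENNReal.ofReal (v x - u x) ∂μ := by
  have layer_u := lintegral_eq_lintegral_meas_lt μ (Eventually.of_forall hu0) hu.aemeasurable
  have layer_v := lintegral_eq_lintegral_meas_lt μ (Eventually.of_forall (hu0.trans huv))
    hv.aemeasurable
  rw [lintegral_sub (f := fun t => μ {x | t < v x}) (antitone_measure_setOf_lt μ u).measurable
      (layer_u ▸ hfin) (Eventually.of_forall fun t => measure_mono fun x hx => hx.trans_le (huv x)),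
    ← layer_u, ← layer_v, ← lintegral_sub hu.ennreal_ofReal hfin
      (Eventually.of_forall fun x => ENNReal.ofReal_le_ofReal (huv x))]
  exact lintegral_congr fun x => (ENNReal.ofReal_sub _ (hu0 x)).symm

lemma lintegral_measure_thickening_sub {E : Type*} [PseudoMetricSpace E] [MeasurableSpace E]
    [OpensMeasurableSpace E] (μ : Measure E) {u : E → ℝ} {K : ℝ≥0} (hu : LipschitzWith K u)
    (hu0 : 0 ≤ u) (hfin : ∫⁻ x, ENNReal.ofReal (u x) ∂μ ≠ ∞) {h : ℝ} (hh : 0 < h) :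
    ∫⁻ t in Ioi 0, ENNReal.ofReal h⁻¹ *
        (μ (Metric.thickening h {x | t < u x}) - μ {x | t < u x}) =
      ∫⁻ x, ENNReal.ofReal ((ballSup u h x - u x) / h) ∂μ := by
  simp_rw [← setOf_lt_ballSup hu hh]
  rw [lintegral_const_mul' _ _ ENNReal.ofReal_ne_top, lintegral_meas_lt_sub_meas_lt μ hu0
    (le_ballSup hu hh) hu.continuous.measurable (measurable_ballSup hu hh) hfin,
    ← lintegral_const_mul' _ _ ENNReal.ofReal_ne_top]
  refine lintegral_congr fun x => ?_
  rw [← ENNReal.ofReal_mul (inv_nonneg.2 hh.le), ← div_eq_inv_mul]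

lemma LipschitzWith.integrable_norm_fderiv {E : Type*} [NormedAddCommGroup E] [NormedSpace ℝ E]
    [MeasurableSpace E] [OpensMeasurableSpace E] {μ : Measure E} [IsFiniteMeasureOnCompacts μ]
    {f : E → ℝ} {K : ℝ≥0} (hf : LipschitzWith K f) (hfs : HasCompactSupport f) :
    Integrable (fun x => ‖fderiv ℝ f x‖) μ := by
  refine (integrableOn_iff_integrable_of_support_subset (subset_tsupport _)).1 ?_
  refine Measure.integrableOn_of_bounded (M := K) (hfs.fderiv ℝ).norm.measure_lt_top.ne
    (measurable_fderiv ℝ f).norm.aestronglyMeasurable (Eventually.of_forall fun _ => ?_)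
  simpa using norm_fderiv_le_of_lipschitz ℝ hf

lemma HasCompactSupport.isBounded_setOf_lt_abs {E : Type*} [PseudoMetricSpace E] {f : E → ℝ}
    (hfs : HasCompactSupport f) {t : ℝ} (ht : 0 ≤ t) : Bornology.IsBounded {x | t < |f x|} :=
  hfs.isCompact.isBounded.subset fun _ hx => subset_tsupport f (abs_pos.1 (ht.trans_lt hx))

theorem lintegral_ofReal_minkContent_le {E : Type*} [NormedAddCommGroup E] [NormedSpace ℝ E]
    [FiniteDimensional ℝ E] [MeasurableSpace E] [BorelSpace E] (μ : Measure E)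
    [μ.IsAddHaarMeasure] {f : E → ℝ} {K : ℝ≥0} (hf : LipschitzWith K f)
    (hfs : HasCompactSupport f) :
    ∫⁻ t in Ioi 0, ENNReal.ofReal (minkContent μ {x | t < |f x|}) ≤
      ∫⁻ x, ENNReal.ofReal ‖fderiv ℝ f x‖ ∂μ := by
  set u : E → ℝ := fun x => |f x|
  set r : ℕ → ℝ := fun k => 1 / ((k : ℝ) + 1)
  set g : ℕ → E → ℝ≥0∞ := fun k x => ENNReal.ofReal ((ballSup u (r k) x - u x) / r k)
  have hu : LipschitzWith K u := by
    simpa [Function.comp_def] using lipschitzWith_one_norm.comp hf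
  have hr0 : ∀ k, 0 < r k := fun k => by positivity
  have hr1 : ∀ k, r k ≤ 1 := fun k => div_le_one_of_le₀ (by simp) (by positivity)
  have hr : Tendsto r atTop (𝓝[>] 0) := tendsto_nhdsWithin_of_tendsto_nhds_of_eventually_within _
    tendsto_one_div_add_atTop_nhds_zero_nat (Eventually.of_forall hr0)
  have hsupp : Bornology.IsBounded (Function.support u) :=
    hfs.isCompact.isBounded.subset fun x hx => subset_tsupport f (by simpa [u] using hx)
  have hfin : ∫⁻ x, ENNReal.ofReal (u x) ∂μ ≠ ∞ :=
    (hu.continuous.integrable_of_hasCompactSupport hfs.norm).lintegral_lt_top.ne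
  have hdom : ∫⁻ x, (Metric.thickening 1 (Function.support u)).indicator
      (fun _ => (K : ℝ≥0∞)) x ∂μ ≠ ∞ := by
    rw [lintegral_indicator Metric.isOpen_thickening.measurableSet, setLIntegral_const]
    exact ENNReal.mul_ne_top ENNReal.coe_ne_top hsupp.thickening.measure_lt_top.ne
  have hlimsup : ∀ᵐ x ∂μ, limsup (fun k => g k x) atTop ≤ ENNReal.ofReal ‖fderiv ℝ f x‖ := by
    filter_upwards [hf.ae_differentiableAt] with x hx
    exact limsup_ofReal_ballSup_abs_sub_div_le hx.hasFDerivAt hr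
  calc ∫⁻ t in Ioi 0, ENNReal.ofReal (minkContent μ {x | t < u x})
      ≤ ∫⁻ t in Ioi 0, liminf (fun k => ENNReal.ofReal (r k)⁻¹ *
          (μ (Metric.thickening (r k) {x | t < u x}) - μ {x | t < u x})) atTop :=
        setLIntegral_mono' measurableSet_Ioi fun t ht => ofReal_minkContent_le_liminf μ
          (hfs.isBounded_setOf_lt_abs (le_of_lt ht)).measure_lt_top.ne hr
    _ ≤ liminf (fun k => ∫⁻ t in Ioi 0, ENNReal.ofReal (r k)⁻¹ *
          (μ (Metric.thickening (r k) {x | t < u x}) - μ {x | t < u x})) atTop :=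
        lintegral_liminf_le fun k => by
          simp_rw [← setOf_lt_ballSup hu (hr0 k)]
          exact (((antitone_measure_setOf_lt μ _).measurable).sub
            (antitone_measure_setOf_lt μ u).measurable).const_mul _
    _ = liminf (fun k => ∫⁻ x, g k x ∂μ) atTop := by
        simp_rw [lintegral_measure_thickening_sub μ hu (fun _ => abs_nonneg _) hfin (hr0 _)]
        rfl
    _ ≤ limsup (fun k => ∫⁻ x, g k x ∂μ) atTop := liminf_le_limsup
    _ ≤ ∫⁻ x, limsup (fun k => g k x) atTop ∂μ :=
        limsup_lintegral_le _ (fun k => (((measurable_ballSup hu (hr0 k)).sub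
          hu.continuous.measurable).div_const _).ennreal_ofReal)
          (fun k => Eventually.of_forall
            (ofReal_ballSup_sub_div_le_indicator hu (hr0 k) (hr1 k))) hdom
    _ ≤ _ := lintegral_mono_ae hlimsup

theorem isoperimetry_implies_lorentz_sobolev_general
    (n : ℕ) (X : RINorm (volume.restrict (Ioi (0:ℝ))))
    (c : ℝ) (hc : 0 < c)
    (hiso : ∀ A : Set (EuclideanSpace ℝ (Fin n)), MeasurableSet A → volume A < ⊤ →
      X.fund ((volume A).toReal) ≤ ENNReal.ofReal (c * minkContent volume A)) :
    ∀ f : EuclideanSpace ℝ (Fin n) → ℝ, (∃ K, LipschitzWith K f) → HasCompactSupport f →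
      ∫⁻ t in Ioi (0:ℝ), X.fund (distrib volume f t) ≤
        ENNReal.ofReal (c * ∫ x, ‖fderiv ℝ f x‖) := by
  rintro f ⟨K, hf⟩ hfs
  have hlevel : ∀ t ∈ Ioi (0:ℝ), X.fund (distrib volume f t) ≤
      ENNReal.ofReal c * ENNReal.ofReal (minkContent volume {x | t < |f x|}) := fun t ht => by
    rw [← ENNReal.ofReal_mul hc.le]
    exact hiso _ (isOpen_lt continuous_const hf.continuous.abs).measurableSet
      (hfs.isBounded_setOf_lt_abs (le_of_lt ht)).measure_lt_top
  calc ∫⁻ t in Ioi (0:ℝ), X.fund (distrib volume f t)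
      ≤ ∫⁻ t in Ioi (0:ℝ), ENNReal.ofReal c *
          ENNReal.ofReal (minkContent volume {x | t < |f x|}) :=
        setLIntegral_mono' measurableSet_Ioi hlevel
    _ = ENNReal.ofReal c *
          ∫⁻ t in Ioi (0:ℝ), ENNReal.ofReal (minkContent volume {x | t < |f x|}) :=
        lintegral_const_mul' _ _ ENNReal.ofReal_ne_top
    _ ≤ ENNReal.ofReal c * ∫⁻ x, ENNReal.ofReal ‖fderiv ℝ f x‖ := by
        gcongr
        exact lintegral_ofReal_minkContent_le volume hf hfs
    _ = ENNReal.ofReal (c * ∫ x, ‖fderiv ℝ f x‖) := by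
        rw [ENNReal.ofReal_mul hc.le, ofReal_integral_eq_lintegral_ofReal
          (hf.integrable_norm_fderiv hfs) (Eventually.of_forall fun _ => norm_nonneg _)]

/-- If the fundamental function of an r.i. space `X(ℝⁿ)` satisfies the
isoperimetric estimate `φ_X(m(A)) ≤ c·m⁺(A)` for all Borel sets of finite measure, then
for every `f ∈ Lip₀(ℝⁿ)` the Lorentz-norm inequality
`∫₀^∞ φ_X(m_f(t)) dt ≤ c ∫ |∇f| dx` holds. -/
theorem isoperimetry_implies_lorentz_sobolev
    (n : ℕ) (hn : 1 ≤ n) (X : RINorm (volume.restrict (Ioi (0:ℝ))))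
    (c : ℝ) (hc : 0 < c)
    (hiso : ∀ A : Set (EuclideanSpace ℝ (Fin n)), MeasurableSet A → volume A < ⊤ →
      X.fund ((volume A).toReal) ≤ ENNReal.ofReal (c * minkContent volume A)) :
    ∀ f : EuclideanSpace ℝ (Fin n) → ℝ, (∃ K, LipschitzWith K f) → HasCompactSupport f →
      ∫⁻ t in Ioi (0:ℝ), X.fund (distrib volume f t) ≤
        ENNReal.ofReal (c * ∫ x, ‖fderiv ℝ f x‖) :=
  isoperimetry_implies_lorentz_sobolev_general n X c hc hiso
end
end

section
/- Let f ∈ Lip₀(ℝⁿ) and t > 0, and define the truncation f_{f*(t)}(x) = |f(x)| − f*(t) if |f(x)| > f*(t), and f_{f*(t)}(x) = 0 if |f(x)| ≤ f*(t). Then f_{f*(t)} ∈ Lip₀(ℝⁿ) and ∫_{ℝⁿ} |∇(f_{f*(t)})(x)| dx ≤ ∫₀ᵗ |∇f|*(s) ds. -/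
open MeasureTheory Set Filter Topology
open scoped ENNReal NNReal

noncomputable section

/-!
Off the closed set `{|f| ≤ f*(t)}` the truncation is `|f| - f*(t)`, whose gradient has the
length of `∇f`; on that set the truncation attains its minimum `0`. Hence
`|∇f_{f*(t)}| ≤ 1_E |∇f|` with `E = {|f| > f*(t)}`. Right continuity of the distribution
function gives `m(E) ≤ t`, and the Hardy–Littlewood inequality `∫_E |g| ≤ ∫₀ᵗ g*`, obtained
by comparing the two layer-cake formulas level by level, concludes.
-/

section Rearrangement

variable {α : Type*} [MeasurableSpace α] {μ : Measure α} {f : α → ℝ} {C s t u : ℝ}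

lemma rearr_nonneg (μ : Measure α) (f : α → ℝ) (s : ℝ) : 0 ≤ rearr μ f s := by
  rcases eq_empty_or_nonempty {t : ℝ | 0 ≤ t ∧ distrib μ f t ≤ s} with he | hne
  · simp [rearr, he, Real.sInf_empty]
  · exact le_csInf hne fun _ hb => hb.1

lemma rearr_le {a : ℝ} (ha : 0 ≤ a) (h : distrib μ f a ≤ s) : rearr μ f s ≤ a :=
  csInf_le ⟨0, fun _ hb => hb.1⟩ ⟨ha, h⟩

lemma distrib_eq_zero_of_abs_le (hC : ∀ x, |f x| ≤ C) : distrib μ f C = 0 := by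
  simp [distrib, (hC _).not_gt]

lemma rearr_set_nonempty (hC : ∀ x, |f x| ≤ C) (hs : 0 ≤ s) :
    {t : ℝ | 0 ≤ t ∧ distrib μ f t ≤ s}.Nonempty :=
  ⟨max C 0, le_max_right C 0,
    (distrib_eq_zero_of_abs_le fun x => (hC x).trans (le_max_left C 0)).trans_le hs⟩

lemma rearr_le_max (hC : ∀ x, |f x| ≤ C) (hs : 0 ≤ s) : rearr μ f s ≤ max C 0 :=
  rearr_le (le_max_right C 0)
    ((distrib_eq_zero_of_abs_le fun x => (hC x).trans (le_max_left C 0)).trans_le hs)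

lemma rearr_antitoneOn_s16 (hC : ∀ x, |f x| ≤ C) : AntitoneOn (rearr μ f) (Ici 0) :=
  fun _ hs₁ _ _ h => csInf_le_csInf ⟨0, fun _ hb => hb.1⟩ (rearr_set_nonempty hC hs₁)
    fun _ hb => ⟨hb.1, hb.2.trans h⟩

lemma aemeasurable_rearr_restrict_Ioo (hC : ∀ x, |f x| ≤ C) (t : ℝ) :
    AEMeasurable (rearr μ f) (volume.restrict (Ioo 0 t)) :=
  aemeasurable_restrict_of_antitoneOn measurableSet_Ioo
    ((rearr_antitoneOn_s16 hC).mono (Ioo_subset_Ioi_self.trans Ioi_subset_Ici_self))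

lemma measure_lt_abs_ne_top (hf : μ (Function.support f) ≠ ∞) (hu : 0 ≤ u) :
    μ {x | u < |f x|} ≠ ∞ :=
  measure_ne_top_of_subset (fun _ hx => abs_pos.1 (hu.trans_lt hx)) hf

lemma distrib_antitoneOn (hf : μ (Function.support f) ≠ ∞) : AntitoneOn (distrib μ f) (Ici 0) :=
  fun _ ha _ _ h => ENNReal.toReal_mono (measure_lt_abs_ne_top hf ha)
    (measure_mono fun _ hx => h.trans_lt hx)

lemma le_rearr_of_lt_distrib (hf : μ (Function.support f) ≠ ∞) (hC : ∀ x, |f x| ≤ C)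
    (hs : 0 ≤ s) (h : s < distrib μ f u) : u ≤ rearr μ f s := by
  refine le_csInf (rearr_set_nonempty hC hs) fun b ⟨hb, hbs⟩ => ?_
  by_contra! hbu
  have := distrib_antitoneOn hf hb (hb.trans hbu.le) hbu.le
  linarith

/-- The infimum defining `rearr μ f t` is attained, by right continuity of the distribution
function. -/
lemma measure_rearr_lt_abs_le_s16 (hf : μ (Function.support f) ≠ ∞) (hC : ∀ x, |f x| ≤ C)
    (ht : 0 ≤ t) :
    μ {x | rearr μ f t < |f x|} ≤ ENNReal.ofReal t := by
  obtain ⟨a, ha_anti, ha_lim, ha_mem⟩ :=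
    exists_seq_tendsto_sInf (rearr_set_nonempty hC ht) ⟨0, fun _ hb => hb.1⟩
  have hsub : {x | rearr μ f t < |f x|} ⊆ ⋃ m, {x | a m < |f x|} := fun x hx =>
    mem_iUnion.2 ((ha_lim.eventually (gt_mem_nhds hx)).exists)
  have hmono : Monotone fun m => {x | a m < |f x|} := fun _ _ h _ hx => (ha_anti h).trans_lt hx
  refine (measure_mono hsub).trans ?_
  rw [hmono.measure_iUnion]
  refine iSup_le fun m => ?_
  rw [← ENNReal.ofReal_toReal (measure_lt_abs_ne_top hf (ha_mem m).1)]
  exact ENNReal.ofReal_le_ofReal (ha_mem m).2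

lemma measure_lt_abs_inter_le (hf : μ (Function.support f) ≠ ∞) (hC : ∀ x, |f x| ≤ C)
    {E : Set α} (hE : μ E ≤ ENNReal.ofReal t) (hu : 0 ≤ u) :
    μ ({x | u < |f x|} ∩ E) ≤ volume ({s | u ≤ rearr μ f s} ∩ Ioo 0 t) := by
  have hsub : Ioo 0 (min t (distrib μ f u)) ⊆ {s | u ≤ rearr μ f s} ∩ Ioo 0 t :=
    fun s hs => ⟨le_rearr_of_lt_distrib hf hC hs.1.le (hs.2.trans_le (min_le_right _ _)),
      hs.1, hs.2.trans_le (min_le_left _ _)⟩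
  calc μ ({x | u < |f x|} ∩ E)
      ≤ min (ENNReal.ofReal t) (ENNReal.ofReal (distrib μ f u)) := by
        refine le_min ((measure_mono inter_subset_right).trans hE) ?_
        rw [distrib, ENNReal.ofReal_toReal (measure_lt_abs_ne_top hf hu)]
        exact measure_mono inter_subset_left
    _ = volume (Ioo 0 (min t (distrib μ f u))) := by
        rw [Real.volume_Ioo, sub_zero, ENNReal.ofReal_min]
    _ ≤ _ := measure_mono hsub

/-- A Hardy–Littlewood inequality: each layer `{u < |f|} ∩ E` is no larger than the
corresponding layer of `rearr μ f` on `(0, t)`, and the layer-cake formula sums them up. -/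
lemma lintegral_abs_le_lintegral_rearr (hfm : Measurable f) (hf : μ (Function.support f) ≠ ∞)
    (hC : ∀ x, |f x| ≤ C) {E : Set α} (hE : μ E ≤ ENNReal.ofReal t) :
    ∫⁻ x in E, ENNReal.ofReal |f x| ∂μ ≤ ∫⁻ s in Ioo 0 t, ENNReal.ofReal (rearr μ f s) := by
  rw [lintegral_eq_lintegral_meas_lt _ (ae_of_all _ fun x => abs_nonneg (f x))
      hfm.abs.aemeasurable,
    lintegral_eq_lintegral_meas_le _ (ae_of_all _ (rearr_nonneg μ f))
      (aemeasurable_rearr_restrict_Ioo hC t)]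
  refine setLIntegral_mono' measurableSet_Ioi fun u hu => ?_
  rw [Measure.restrict_apply (measurableSet_lt measurable_const hfm.abs),
    Measure.restrict_apply' measurableSet_Ioo]
  exact measure_lt_abs_inter_le hf hC hE (le_of_lt hu)

lemma setIntegral_abs_le_integral_rearr (hfm : Measurable f) (hf : μ (Function.support f) ≠ ∞)
    (hC : ∀ x, |f x| ≤ C) {E : Set α} (hE : μ E ≤ ENNReal.ofReal t) (ht : 0 ≤ t) :
    ∫ x in E, |f x| ∂μ ≤ ∫ s in 0..t, rearr μ f s := by
  have hrearr_fin : ∫⁻ s in Ioo 0 t, ENNReal.ofReal (rearr μ f s) ≠ ∞ :=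
    (setLIntegral_lt_top_of_le_nnreal measure_Ioo_lt_top.ne
      ⟨(max C 0).toNNReal, fun s hs => ENNReal.ofReal_le_ofReal (rearr_le_max hC hs.1.le)⟩).ne
  rw [intervalIntegral.integral_of_le ht, integral_Ioc_eq_integral_Ioo,
    integral_eq_lintegral_of_nonneg_ae (ae_of_all _ fun x => abs_nonneg (f x))
      hfm.abs.aestronglyMeasurable,
    integral_eq_lintegral_of_nonneg_ae (ae_of_all _ (rearr_nonneg μ f))
      (aemeasurable_rearr_restrict_Ioo hC t).aestronglyMeasurable]
  exact ENNReal.toReal_mono hrearr_fin (lintegral_abs_le_lintegral_rearr hfm hf hC hE)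

end Rearrangement

lemma lipschitzWith_one_truncation (c : ℝ) : LipschitzWith 1 fun y : ℝ => max (|y| - c) 0 :=
  (LipschitzWith.of_le_add fun a b => by
    rw [Real.dist_eq]; linarith [abs_sub_abs_le_abs_sub a b]).max_const 0

section Truncation

variable {E : Type*} [NormedAddCommGroup E] [NormedSpace ℝ E] {f : E → ℝ} {x : E}

lemma norm_fderiv_abs_of_ne_zero (hf : ContinuousAt f x) (hx : f x ≠ 0) :
    ‖fderiv ℝ (fun y => |f y|) x‖ = ‖fderiv ℝ f x‖ := by
  rcases hx.lt_or_gt with hneg | hpos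
  · have : (fun y => |f y|) =ᶠ[𝓝 x] fun y => -f y :=
      (hf.eventually (gt_mem_nhds hneg)).mono fun _ hy => abs_of_neg hy
    rw [this.fderiv_eq, fderiv_fun_neg, norm_neg]
  · have : (fun y => |f y|) =ᶠ[𝓝 x] f :=
      (hf.eventually (lt_mem_nhds hpos)).mono fun _ hy => abs_of_pos hy
    rw [this.fderiv_eq]

/-- Where `|f| ≤ c` the truncation attains its minimum `0`, so its `fderiv` vanishes there
whether or not it is differentiable. -/
lemma norm_fderiv_truncation_le (hf : ContinuousAt f x) {c : ℝ} (hc : 0 ≤ c) :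
    ‖fderiv ℝ (fun y => max (|f y| - c) 0) x‖ ≤
      {y | c < |f y|}.indicator (fun y => ‖fderiv ℝ f y‖) x := by
  by_cases hx : x ∈ {y | c < |f y|}
  · have : (fun y => max (|f y| - c) 0) =ᶠ[𝓝 x] fun y => |f y| - c :=
      (hf.abs.eventually (lt_mem_nhds hx)).mono fun _ hy => max_eq_left (sub_nonneg.2 hy.le)
    rw [indicator_of_mem hx, this.fderiv_eq, fderiv_sub_const,
      norm_fderiv_abs_of_ne_zero hf (abs_pos.1 (hc.trans_lt hx))]
  · have hfx : |f x| ≤ c := not_lt.1 hx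
    have hmin : IsLocalMin (fun y => max (|f y| - c) 0) x := Eventually.of_forall fun _ =>
      (max_eq_right (sub_nonpos.2 hfx)).trans_le (le_max_right _ _)
    rw [indicator_of_notMem hx, hmin.fderiv_eq_zero, norm_zero]

end Truncation

lemma HasCompactSupport.measure_support_ne_top {X : Type*} [TopologicalSpace X]
    [MeasurableSpace X] {μ : Measure X} [IsFiniteMeasureOnCompacts μ] {f : X → ℝ}
    (hf : HasCompactSupport f) : μ (Function.support f) ≠ ∞ :=
  measure_ne_top_of_subset (subset_tsupport f) hf.measure_lt_top.ne

theorem truncation_gradient_estimate_general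
    (n : ℕ) (f : EuclideanSpace ℝ (Fin n) → ℝ)
    (hfLip : ∃ K, LipschitzWith K f) (hfsupp : HasCompactSupport f) (t : ℝ) (ht : 0 < t) :
    ((∃ K, LipschitzWith K (fun x => max (|f x| - rearr volume f t) 0)) ∧
      HasCompactSupport (fun x => max (|f x| - rearr volume f t) 0)) ∧
    ∫ x, ‖fderiv ℝ (fun y => max (|f y| - rearr volume f t) 0) x‖ ≤
      ∫ s in (0:ℝ)..t, rearr volume (fun x => ‖fderiv ℝ f x‖) s := by
  obtain ⟨K, hK⟩ := hfLip
  set c := rearr volume f t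
  have hc : 0 ≤ c := rearr_nonneg _ _ _
  refine ⟨⟨⟨1 * K, (lipschitzWith_one_truncation c).comp hK⟩,
    hfsupp.comp_left (g := fun y => max (|y| - c) 0) (by simp [hc])⟩, ?_⟩
  obtain ⟨C, hC⟩ := hfsupp.exists_bound_of_continuous hK.continuous
  have hE : volume {x | c < |f x|} ≤ ENNReal.ofReal t :=
    measure_rearr_lt_abs_le_s16 hfsupp.measure_support_ne_top hC ht.le
  have hEm : MeasurableSet {x | c < |f x|} :=
    measurableSet_lt measurable_const hK.continuous.measurable.abs
  have hgrad_bdd : ∀ x, |‖fderiv ℝ f x‖| ≤ K := fun x => by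
    rw [abs_norm]; exact norm_fderiv_le_of_lipschitz ℝ hK
  have hgrad_int : IntegrableOn (fun x => ‖fderiv ℝ f x‖) {x | c < |f x|} :=
    Measure.integrableOn_of_bounded (hE.trans_lt ENNReal.ofReal_lt_top).ne
      (measurable_fderiv ℝ f).norm.aestronglyMeasurable (ae_of_all _ hgrad_bdd)
  calc ∫ x, ‖fderiv ℝ (fun y => max (|f y| - c) 0) x‖
      ≤ ∫ x, {x | c < |f x|}.indicator (fun x => ‖fderiv ℝ f x‖) x :=
        integral_mono_of_nonneg (ae_of_all _ fun _ => norm_nonneg _)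
          ((integrable_indicator_iff hEm).2 hgrad_int)
          (ae_of_all _ fun x => norm_fderiv_truncation_le hK.continuous.continuousAt hc)
    _ = ∫ x in {x | c < |f x|}, |‖fderiv ℝ f x‖| := by
        rw [integral_indicator hEm]; simp only [abs_norm]
    _ ≤ _ := setIntegral_abs_le_integral_rearr (measurable_fderiv ℝ f).norm
        (hfsupp.fderiv (𝕜 := ℝ)).norm.measure_support_ne_top hgrad_bdd hE ht.le

/-- The truncation `f_{f*(t)} = (|f| - f*(t))₊` of `f ∈ Lip₀(ℝⁿ)`
belongs to `Lip₀(ℝⁿ)` and `∫ |∇(f_{f*(t)})| dx ≤ ∫₀ᵗ |∇f|*(s) ds`. -/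
theorem truncation_gradient_estimate
    (n : ℕ) (hn : 1 ≤ n) (f : EuclideanSpace ℝ (Fin n) → ℝ)
    (hfLip : ∃ K, LipschitzWith K f) (hfsupp : HasCompactSupport f) (t : ℝ) (ht : 0 < t) :
    ((∃ K, LipschitzWith K (fun x => max (|f x| - rearr volume f t) 0)) ∧
      HasCompactSupport (fun x => max (|f x| - rearr volume f t) 0)) ∧
    ∫ x, ‖fderiv ℝ (fun y => max (|f y| - rearr volume f t) 0) x‖ ≤
      ∫ s in (0:ℝ)..t, rearr volume (fun x => ‖fderiv ℝ f x‖) s :=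
  truncation_gradient_estimate_general n f hfLip hfsupp t ht
end
end
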